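/- arXiv:2303.11556 — 4 statements merged into one kernel-verified Lean document; each statement's English description precedes it below -/
import Mathlib

section
/- Let g, a, b, c be real numbers and let D : ℝ² → ℝ be smooth and time-independent. Suppose η : ℝ² × ℝ → ℝ and u : ℝ² × ℝ → ℝ² are smooth and satisfy, at every point of ℝ² × ℝ, the energy-conserving abcd-Boussinesq system with equal regularization parameters b = d: ∂_t η + ∇·[(D+η)u + a∇(D³ ∇·u) − b D² ∇(∂_t η)] = 0 and ∂_t u + ∇[ gη + ½|u|² + c g ∇·(D² ∇η) − b ∇·(D² ∂_t u) ] = 0. Assume moreover that there is a compact set K ⊂ ℝ² such that for every t the functions η(·,t) and u(·,t) are supported in K. Then the energy E(t) = ½ ∫_{ℝ²} [ gη² + (D+η)|u|² − c g D² |∇η|² − a D³ (∇·u)² ] dx is constant in time: E(t) = E(0) for all t ∈ ℝ. -/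
/-!
The energy density `e = gη² + (D+η)|u|² − c g D²|∇η|² − a D³(∇·u)²` satisfies the local
conservation law `∂ₜe + ∇·F = 0` with flux
`F = 2 (Q R + a D³(∇·u) ∂ₜu + c g ∂ₜη D²∇η − b ∂ₜη D²∂ₜu)`: when `∇·F` is expanded, the mass
equation multiplied by `2Q` and the momentum equations multiplied by `2R` leave exactly `−∂ₜe`,
using the symmetry of mixed partial derivatives; the regularisation terms cancel in pairs
because the same coefficient `b` occurs in both equations. As every quantity vanishes outside
the compact set `K`, the divergence integrates to zero over the plane, and differentiating under
the integral sign gives `E' = 0`.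
-/

open MeasureTheory

noncomputable section

/-- Partial derivative in the first spatial variable of a function of (x, y, t). -/
def pX (f : ℝ → ℝ → ℝ → ℝ) (x y t : ℝ) : ℝ := deriv (fun s => f s y t) x

/-- Partial derivative in the second spatial variable of a function of (x, y, t). -/
def pY (f : ℝ → ℝ → ℝ → ℝ) (x y t : ℝ) : ℝ := deriv (fun s => f x s t) y

/-- Partial derivative in time of a function of (x, y, t). -/
def pT (f : ℝ → ℝ → ℝ → ℝ) (x y t : ℝ) : ℝ := deriv (fun s => f x y s) t

/-- Spatial divergence ∇·u of the planar field u = (u1, u2). -/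
def divU (u1 u2 : ℝ → ℝ → ℝ → ℝ) : ℝ → ℝ → ℝ → ℝ :=
  fun x y t => pX u1 x y t + pY u2 x y t

/-- First component of R = (D+η)u + a∇(D³∇·u) − b D²∇(∂ₜη). -/
def R1 (a b : ℝ) (D : ℝ → ℝ → ℝ) (η u1 u2 : ℝ → ℝ → ℝ → ℝ) : ℝ → ℝ → ℝ → ℝ :=
  fun x y t => (D x y + η x y t) * u1 x y t
    + a * pX (fun x y t => (D x y)^3 * divU u1 u2 x y t) x y t
    - b * (D x y)^2 * pX (pT η) x y t

/-- Second component of R = (D+η)u + a∇(D³∇·u) − b D²∇(∂ₜη). -/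
def R2 (a b : ℝ) (D : ℝ → ℝ → ℝ) (η u1 u2 : ℝ → ℝ → ℝ → ℝ) : ℝ → ℝ → ℝ → ℝ :=
  fun x y t => (D x y + η x y t) * u2 x y t
    + a * pY (fun x y t => (D x y)^3 * divU u1 u2 x y t) x y t
    - b * (D x y)^2 * pY (pT η) x y t

/-- Q = gη + ½|u|² + c g ∇·(D²∇η) − b ∇·(D²∂ₜu). -/
def Qf (g b c : ℝ) (D : ℝ → ℝ → ℝ) (η u1 u2 : ℝ → ℝ → ℝ → ℝ) : ℝ → ℝ → ℝ → ℝ :=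
  fun x y t => g * η x y t + ((u1 x y t)^2 + (u2 x y t)^2) / 2
    + c * g * (pX (fun x y t => (D x y)^2 * pX η x y t) x y t
             + pY (fun x y t => (D x y)^2 * pY η x y t) x y t)
    - b * (pX (fun x y t => (D x y)^2 * pT u1 x y t) x y t
         + pY (fun x y t => (D x y)^2 * pT u2 x y t) x y t)

/-- The energy functional
E(t) = ½ ∫_{ℝ²} [gη² + (D+η)|u|² − c g D²|∇η|² − a D³(∇·u)²] dx. -/
def energy (g a c : ℝ) (D : ℝ → ℝ → ℝ) (η u1 u2 : ℝ → ℝ → ℝ → ℝ) (t : ℝ) : ℝ :=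
  (1/2) * ∫ p : ℝ × ℝ,
    (g * (η p.1 p.2 t)^2
      + (D p.1 p.2 + η p.1 p.2 t) * ((u1 p.1 p.2 t)^2 + (u2 p.1 p.2 t)^2)
      - c * g * (D p.1 p.2)^2 * ((pX η p.1 p.2 t)^2 + (pY η p.1 p.2 t)^2)
      - a * (D p.1 p.2)^3 * (divU u1 u2 p.1 p.2 t)^2)

namespace Boussinesq

def uncurry3 (f : ℝ → ℝ → ℝ → ℝ) (p : ℝ × ℝ × ℝ) : ℝ := f p.1 p.2.1 p.2.2

def IsSmooth (f : ℝ → ℝ → ℝ → ℝ) : Prop := ContDiff ℝ (⊤ : ℕ∞) (uncurry3 f)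

def VanishesOutside (K : Set (ℝ × ℝ)) (f : ℝ → ℝ → ℝ → ℝ) : Prop :=
  ∀ x y t : ℝ, (x, y) ∉ K → f x y t = 0

section Calculus

variable {f h u1 u2 : ℝ → ℝ → ℝ → ℝ}

namespace IsSmooth

lemma add (hf : IsSmooth f) (hh : IsSmooth h) : IsSmooth fun x y t => f x y t + h x y t :=
  ContDiff.add hf hh

lemma sub (hf : IsSmooth f) (hh : IsSmooth h) : IsSmooth fun x y t => f x y t - h x y t :=
  ContDiff.sub hf hh

lemma mul (hf : IsSmooth f) (hh : IsSmooth h) : IsSmooth fun x y t => f x y t * h x y t :=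
  ContDiff.mul hf hh

lemma const_mul (r : ℝ) (hf : IsSmooth f) : IsSmooth fun x y t => r * f x y t :=
  ContDiff.mul contDiff_const hf

lemma div_const (hf : IsSmooth f) (r : ℝ) : IsSmooth fun x y t => f x y t / r :=
  ContDiff.div_const hf r

lemma pow (hf : IsSmooth f) (n : ℕ) : IsSmooth fun x y t => f x y t ^ n :=
  ContDiff.pow hf n

lemma contDiff_sliceX (hf : IsSmooth f) (y t : ℝ) : ContDiff ℝ (⊤ : ℕ∞) fun s => f s y t :=
  ContDiff.comp (g := uncurry3 f) hf (by fun_prop : ContDiff ℝ (⊤ : ℕ∞) fun s => (s, y, t))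

lemma contDiff_sliceY (hf : IsSmooth f) (x t : ℝ) : ContDiff ℝ (⊤ : ℕ∞) fun s => f x s t :=
  ContDiff.comp (g := uncurry3 f) hf (by fun_prop : ContDiff ℝ (⊤ : ℕ∞) fun s => (x, s, t))

lemma contDiff_sliceT (hf : IsSmooth f) (x y : ℝ) : ContDiff ℝ (⊤ : ℕ∞) fun s => f x y s :=
  ContDiff.comp (g := uncurry3 f) hf (by fun_prop : ContDiff ℝ (⊤ : ℕ∞) fun s => (x, y, s))

lemma hasDerivAt_pX (hf : IsSmooth f) (x y t : ℝ) :
    HasDerivAt (fun s => f s y t) (pX f x y t) x :=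
  ((hf.contDiff_sliceX y t).differentiable (by simp) x).hasDerivAt

lemma hasDerivAt_pY (hf : IsSmooth f) (x y t : ℝ) :
    HasDerivAt (fun s => f x s t) (pY f x y t) y :=
  ((hf.contDiff_sliceY x t).differentiable (by simp) y).hasDerivAt

lemma hasDerivAt_pT (hf : IsSmooth f) (x y t : ℝ) :
    HasDerivAt (fun s => f x y s) (pT f x y t) t :=
  ((hf.contDiff_sliceT x y).differentiable (by simp) t).hasDerivAt

lemma hasDerivAt_comp (hf : IsSmooth f) {γ : ℝ → ℝ × ℝ × ℝ} {v : ℝ × ℝ × ℝ} {s : ℝ}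
    (hγ : HasDerivAt γ v s) :
    HasDerivAt (fun r => uncurry3 f (γ r)) (fderiv ℝ (uncurry3 f) (γ s) v) s :=
  (ContDiff.differentiable hf (by simp) (γ s)).hasFDerivAt.comp_hasDerivAt s hγ

lemma uncurry3_pX (hf : IsSmooth f) :
    uncurry3 (pX f) = fun p => fderiv ℝ (uncurry3 f) p (1, 0, 0) :=
  funext fun p => (hf.hasDerivAt_comp ((hasDerivAt_id p.1).prodMk (hasDerivAt_const _ p.2))).deriv

lemma uncurry3_pY (hf : IsSmooth f) :
    uncurry3 (pY f) = fun p => fderiv ℝ (uncurry3 f) p (0, 1, 0) :=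
  funext fun p => (hf.hasDerivAt_comp ((hasDerivAt_const _ p.1).prodMk
    ((hasDerivAt_id p.2.1).prodMk (hasDerivAt_const _ p.2.2)))).deriv

lemma uncurry3_pT (hf : IsSmooth f) :
    uncurry3 (pT f) = fun p => fderiv ℝ (uncurry3 f) p (0, 0, 1) :=
  funext fun p => (hf.hasDerivAt_comp ((hasDerivAt_const _ p.1).prodMk
    ((hasDerivAt_const _ p.2.1).prodMk (hasDerivAt_id p.2.2)))).deriv

lemma contDiff_fderiv_apply (hf : IsSmooth f) (v : ℝ × ℝ × ℝ) :
    ContDiff ℝ (⊤ : ℕ∞) fun p => fderiv ℝ (uncurry3 f) p v :=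
  (ContDiff.fderiv_right hf (by exact_mod_cast le_top)).clm_apply contDiff_const

lemma pX (hf : IsSmooth f) : IsSmooth (_root_.pX f) := by
  rw [IsSmooth, hf.uncurry3_pX]; exact hf.contDiff_fderiv_apply _

lemma pY (hf : IsSmooth f) : IsSmooth (_root_.pY f) := by
  rw [IsSmooth, hf.uncurry3_pY]; exact hf.contDiff_fderiv_apply _

lemma pT (hf : IsSmooth f) : IsSmooth (_root_.pT f) := by
  rw [IsSmooth, hf.uncurry3_pT]; exact hf.contDiff_fderiv_apply _

lemma fderiv_fderiv_apply_comm (hf : IsSmooth f) (p v w : ℝ × ℝ × ℝ) :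
    fderiv ℝ (fun q => fderiv ℝ (uncurry3 f) q v) p w =
      fderiv ℝ (fun q => fderiv ℝ (uncurry3 f) q w) p v := by
  have hdiff : DifferentiableAt ℝ (fderiv ℝ (uncurry3 f)) p :=
    (ContDiff.fderiv_right hf (m := (⊤ : ℕ∞)) (by exact_mod_cast le_top)).differentiable
      (by simp) p
  rw [fderiv_clm_apply hdiff (differentiableAt_const v),
    fderiv_clm_apply hdiff (differentiableAt_const w)]
  have hsymm : IsSymmSndFDerivAt ℝ (uncurry3 f) p :=
    (ContDiff.contDiffAt hf).isSymmSndFDerivAt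
      (by simp only [minSmoothness_of_isRCLikeNormedField]; norm_cast)
  simpa using hsymm.eq w v

lemma pT_pX_comm (hf : IsSmooth f) (x y t : ℝ) :
    _root_.pT (_root_.pX f) x y t = _root_.pX (_root_.pT f) x y t := by
  change uncurry3 (_root_.pT (_root_.pX f)) (x, y, t) = uncurry3 (_root_.pX (_root_.pT f)) (x, y, t)
  rw [hf.pX.uncurry3_pT, hf.pT.uncurry3_pX, hf.uncurry3_pX, hf.uncurry3_pT]
  exact hf.fderiv_fderiv_apply_comm _ _ _

lemma pT_pY_comm (hf : IsSmooth f) (x y t : ℝ) :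
    _root_.pT (_root_.pY f) x y t = _root_.pY (_root_.pT f) x y t := by
  change uncurry3 (_root_.pT (_root_.pY f)) (x, y, t) = uncurry3 (_root_.pY (_root_.pT f)) (x, y, t)
  rw [hf.pY.uncurry3_pT, hf.pT.uncurry3_pY, hf.uncurry3_pY, hf.uncurry3_pT]
  exact hf.fderiv_fderiv_apply_comm _ _ _

lemma divU (hu1 : IsSmooth u1) (hu2 : IsSmooth u2) : IsSmooth (divU u1 u2) :=
  hu1.pX.add hu2.pY

end IsSmooth

end Calculus

section Support

variable {f u1 u2 : ℝ → ℝ → ℝ → ℝ} {K : Set (ℝ × ℝ)}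

namespace VanishesOutside

lemma mul_left (hf : VanishesOutside K f) (h : ℝ → ℝ → ℝ → ℝ) :
    VanishesOutside K fun x y t => h x y t * f x y t :=
  fun x y t hxy => by simp only [hf x y t hxy, mul_zero]

lemma pX (hK : IsClosed K) (hf : VanishesOutside K f) : VanishesOutside K (_root_.pX f) := by
  intro x y t hxy
  have hnhds : ∀ᶠ s in nhds x, f s y t = 0 :=
    Filter.mem_of_superset ((continuous_id.prodMk continuous_const).continuousAt.preimage_mem_nhds
      (hK.isOpen_compl.mem_nhds hxy)) fun s hs => hf s y t hs
  exact (Filter.EventuallyEq.deriv_eq hnhds).trans (deriv_const x 0)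

lemma pY (hK : IsClosed K) (hf : VanishesOutside K f) : VanishesOutside K (_root_.pY f) := by
  intro x y t hxy
  have hnhds : ∀ᶠ s in nhds y, f x s t = 0 :=
    Filter.mem_of_superset ((continuous_const.prodMk continuous_id).continuousAt.preimage_mem_nhds
      (hK.isOpen_compl.mem_nhds hxy)) fun s hs => hf x s t hs
  exact (Filter.EventuallyEq.deriv_eq hnhds).trans (deriv_const y 0)

lemma pT (hf : VanishesOutside K f) : VanishesOutside K (_root_.pT f) := by
  intro x y t hxy
  change deriv (fun s => f x y s) t = 0
  simp only [hf x y _ hxy, deriv_const]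

lemma hasCompactSupport_slice (hK : IsCompact K) (hf : VanishesOutside K f) (t : ℝ) :
    HasCompactSupport fun p : ℝ × ℝ => f p.1 p.2 t :=
  HasCompactSupport.intro hK fun p hp => hf p.1 p.2 t hp

lemma hasCompactSupport_sliceX (hK : IsCompact K) (hf : VanishesOutside K f) (y t : ℝ) :
    HasCompactSupport fun s => f s y t :=
  HasCompactSupport.intro (hK.image continuous_fst) fun s hs =>
    hf s y t fun hmem => hs ⟨(s, y), hmem, rfl⟩

lemma hasCompactSupport_sliceY (hK : IsCompact K) (hf : VanishesOutside K f) (x t : ℝ) :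
    HasCompactSupport fun s => f x s t :=
  HasCompactSupport.intro (hK.image continuous_snd) fun s hs =>
    hf x s t fun hmem => hs ⟨(x, s), hmem, rfl⟩

lemma divU (hK : IsClosed K) (hu1 : VanishesOutside K u1)
    (hu2 : VanishesOutside K u2) : VanishesOutside K (divU u1 u2) := fun x y t hxy => by
  rw [_root_.divU, hu1.pX hK x y t hxy, hu2.pY hK x y t hxy, add_zero]

end VanishesOutside

end Support

lemma _root_.HasCompactSupport.integral_deriv_eq_zero {φ : ℝ → ℝ} (hφ : ContDiff ℝ 1 φ)
    (hs : HasCompactSupport φ) : ∫ x, deriv φ x = 0 := by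
  have hint : Integrable (deriv φ) :=
    (hφ.continuous_deriv le_rfl).integrable_of_hasCompactSupport hs.deriv
  rw [← intervalIntegral.integral_Iic_add_Ioi (b := 0) hint.integrableOn hint.integrableOn,
    hs.integral_Iic_deriv_eq hφ, hs.integral_Ioi_deriv_eq hφ, add_neg_cancel]

section Integrals

variable {f F G : ℝ → ℝ → ℝ → ℝ} {K : Set (ℝ × ℝ)}

namespace IsSmooth

lemma continuous_slice (hf : IsSmooth f) (t : ℝ) : Continuous fun p : ℝ × ℝ => f p.1 p.2 t :=
  (ContDiff.continuous (f := uncurry3 f) hf).comp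
    (by fun_prop : Continuous fun p : ℝ × ℝ => (p.1, p.2, t))

lemma integrable_slice (hf : IsSmooth f) (hK : IsCompact K) (hv : VanishesOutside K f)
    (t : ℝ) : Integrable fun p : ℝ × ℝ => f p.1 p.2 t :=
  (hf.continuous_slice t).integrable_of_hasCompactSupport (hv.hasCompactSupport_slice hK t)

lemma integral_pX_eq_zero (hf : IsSmooth f) (hK : IsCompact K) (hv : VanishesOutside K f)
    (t : ℝ) : ∫ p : ℝ × ℝ, _root_.pX f p.1 p.2 t = 0 := by
  have hint := hf.pX.integrable_slice hK (hv.pX hK.isClosed) t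
  rw [Measure.volume_eq_prod] at hint ⊢
  rw [integral_prod_symm _ hint]
  have hslice (y : ℝ) : ∫ x, _root_.pX f x y t = 0 :=
    (hv.hasCompactSupport_sliceX hK y t).integral_deriv_eq_zero
      ((hf.contDiff_sliceX y t).of_le (by exact_mod_cast le_top))
  simp only [hslice, integral_zero]

lemma integral_pY_eq_zero (hf : IsSmooth f) (hK : IsCompact K) (hv : VanishesOutside K f)
    (t : ℝ) : ∫ p : ℝ × ℝ, _root_.pY f p.1 p.2 t = 0 := by
  have hint := hf.pY.integrable_slice hK (hv.pY hK.isClosed) t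
  rw [Measure.volume_eq_prod] at hint ⊢
  rw [integral_prod _ hint]
  have hslice (x : ℝ) : ∫ y, _root_.pY f x y t = 0 :=
    (hv.hasCompactSupport_sliceY hK x t).integral_deriv_eq_zero
      ((hf.contDiff_sliceY x t).of_le (by exact_mod_cast le_top))
  simp only [hslice, integral_zero]

lemma hasDerivAt_integral_slice (hf : IsSmooth f) (hK : IsCompact K) (hv : VanishesOutside K f)
    (t₀ : ℝ) :
    HasDerivAt (fun t => ∫ p : ℝ × ℝ, f p.1 p.2 t) (∫ p : ℝ × ℝ, _root_.pT f p.1 p.2 t₀) t₀ := by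
  obtain ⟨C, hC⟩ :=
    (hK.prod (isCompact_Icc (a := t₀ - 1) (b := t₀ + 1))).exists_bound_of_continuousOn
    ((ContDiff.continuous (f := uncurry3 (_root_.pT f)) hf.pT).comp
      (by fun_prop : Continuous fun q : (ℝ × ℝ) × ℝ => (q.1.1, q.1.2, q.2))).continuousOn
  have hbound (p : ℝ × ℝ) (t : ℝ) (ht : t ∈ Metric.ball t₀ 1) :
      ‖_root_.pT f p.1 p.2 t‖ ≤ K.indicator (fun _ => C) p := by
    by_cases hp : p ∈ K
    · rw [Metric.mem_ball, Real.dist_eq, abs_lt] at ht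
      rw [Set.indicator_of_mem hp]
      exact hC (p, t) ⟨hp, by constructor <;> linarith⟩
    · rw [Set.indicator_of_notMem hp, hv.pT p.1 p.2 t hp, norm_zero]
  exact (hasDerivAt_integral_of_dominated_loc_of_deriv_le (Metric.ball_mem_nhds t₀ one_pos)
    (.of_forall fun t => (hf.continuous_slice t).aestronglyMeasurable)
    (hf.integrable_slice hK hv t₀) (hf.pT.continuous_slice t₀).aestronglyMeasurable
    (.of_forall hbound)
    ((integrableOn_const hK.measure_lt_top.ne).integrable_indicator hK.isClosed.measurableSet)
    (.of_forall fun p t _ => hf.hasDerivAt_pT p.1 p.2 t)).2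

end IsSmooth

theorem integral_eq_of_conservation_law (hK : IsCompact K)
    (he : IsSmooth f) (hF : IsSmooth F) (hG : IsSmooth G) (hve : VanishesOutside K f)
    (hvF : VanishesOutside K F) (hvG : VanishesOutside K G)
    (hlaw : ∀ x y t, pT f x y t + pX F x y t + pY G x y t = 0) (t s : ℝ) :
    ∫ p : ℝ × ℝ, f p.1 p.2 t = ∫ p : ℝ × ℝ, f p.1 p.2 s := by
  have hderiv (τ : ℝ) : HasDerivAt (fun t => ∫ p : ℝ × ℝ, f p.1 p.2 t) 0 τ := by
    have hflux : ∫ p : ℝ × ℝ, pT f p.1 p.2 τ = 0 := calc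
      _ = -((∫ p : ℝ × ℝ, pX F p.1 p.2 τ) + ∫ p : ℝ × ℝ, pY G p.1 p.2 τ) := by
        rw [← integral_add (hF.pX.integrable_slice hK (hvF.pX hK.isClosed) τ)
          (hG.pY.integrable_slice hK (hvG.pY hK.isClosed) τ), ← integral_neg]
        exact integral_congr_ae (.of_forall fun p => by linear_combination hlaw p.1 p.2 τ)
      _ = 0 := by
        rw [hF.integral_pX_eq_zero hK hvF, hG.integral_pY_eq_zero hK hvG, add_zero, neg_zero]
    simpa only [hflux] using he.hasDerivAt_integral_slice hK hve τ
  exact is_const_of_deriv_eq_zero (fun τ => (hderiv τ).differentiableAt)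
    (fun τ => (hderiv τ).deriv) t s

end Integrals

def energyDensity (g a c : ℝ) (D : ℝ → ℝ → ℝ) (η u1 u2 : ℝ → ℝ → ℝ → ℝ) :
    ℝ → ℝ → ℝ → ℝ :=
  fun x y t => g * (η x y t)^2
    + (D x y + η x y t) * ((u1 x y t)^2 + (u2 x y t)^2)
    - c * g * (D x y)^2 * ((pX η x y t)^2 + (pY η x y t)^2)
    - a * (D x y)^3 * (divU u1 u2 x y t)^2

def energyFluxX (g a b c : ℝ) (D : ℝ → ℝ → ℝ) (η u1 u2 : ℝ → ℝ → ℝ → ℝ) :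
    ℝ → ℝ → ℝ → ℝ :=
  fun x y t => 2 * (Qf g b c D η u1 u2 x y t * R1 a b D η u1 u2 x y t
    + a * ((D x y)^3 * divU u1 u2 x y t) * pT u1 x y t
    + c * g * pT η x y t * ((D x y)^2 * pX η x y t)
    - b * pT η x y t * ((D x y)^2 * pT u1 x y t))

def energyFluxY (g a b c : ℝ) (D : ℝ → ℝ → ℝ) (η u1 u2 : ℝ → ℝ → ℝ → ℝ) :
    ℝ → ℝ → ℝ → ℝ :=
  fun x y t => 2 * (Qf g b c D η u1 u2 x y t * R2 a b D η u1 u2 x y t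
    + a * ((D x y)^3 * divU u1 u2 x y t) * pT u2 x y t
    + c * g * pT η x y t * ((D x y)^2 * pY η x y t)
    - b * pT η x y t * ((D x y)^2 * pT u2 x y t))

section Energy

variable {g a b c : ℝ} {D : ℝ → ℝ → ℝ} {f η u1 u2 : ℝ → ℝ → ℝ → ℝ} {K : Set (ℝ × ℝ)}

lemma isSmooth_bottom (hD : ContDiff ℝ (⊤ : ℕ∞) fun p : ℝ × ℝ => D p.1 p.2) :
    IsSmooth fun x y _ => D x y :=
  hD.comp (contDiff_fst.prodMk (contDiff_fst.comp contDiff_snd))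

lemma IsSmooth.bottom_pow_mul (hD : ContDiff ℝ (⊤ : ℕ∞) fun p : ℝ × ℝ => D p.1 p.2) (n : ℕ)
    (hf : IsSmooth f) : IsSmooth fun x y t => D x y ^ n * f x y t :=
  ((isSmooth_bottom hD).pow n).mul hf

lemma isSmooth_Qf (hD : ContDiff ℝ (⊤ : ℕ∞) fun p : ℝ × ℝ => D p.1 p.2) (hη : IsSmooth η)
    (hu1 : IsSmooth u1) (hu2 : IsSmooth u2) : IsSmooth (Qf g b c D η u1 u2) :=
  (((hη.const_mul g).add (((hu1.pow 2).add (hu2.pow 2)).div_const 2)).add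
    (((hη.pX.bottom_pow_mul hD 2).pX.add (hη.pY.bottom_pow_mul hD 2).pY).const_mul (c * g))).sub
    (((hu1.pT.bottom_pow_mul hD 2).pX.add (hu2.pT.bottom_pow_mul hD 2).pY).const_mul b)

lemma isSmooth_R1 (hD : ContDiff ℝ (⊤ : ℕ∞) fun p : ℝ × ℝ => D p.1 p.2) (hη : IsSmooth η)
    (hu1 : IsSmooth u1) (hu2 : IsSmooth u2) : IsSmooth (R1 a b D η u1 u2) :=
  ((((isSmooth_bottom hD).add hη).mul hu1).add
    (((hu1.divU hu2).bottom_pow_mul hD 3).pX.const_mul a)).sub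
    ((((isSmooth_bottom hD).pow 2).const_mul b).mul hη.pT.pX)

lemma isSmooth_R2 (hD : ContDiff ℝ (⊤ : ℕ∞) fun p : ℝ × ℝ => D p.1 p.2) (hη : IsSmooth η)
    (hu1 : IsSmooth u1) (hu2 : IsSmooth u2) : IsSmooth (R2 a b D η u1 u2) :=
  ((((isSmooth_bottom hD).add hη).mul hu2).add
    (((hu1.divU hu2).bottom_pow_mul hD 3).pY.const_mul a)).sub
    ((((isSmooth_bottom hD).pow 2).const_mul b).mul hη.pT.pY)

lemma isSmooth_energyDensity (hD : ContDiff ℝ (⊤ : ℕ∞) fun p : ℝ × ℝ => D p.1 p.2)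
    (hη : IsSmooth η) (hu1 : IsSmooth u1) (hu2 : IsSmooth u2) :
    IsSmooth (energyDensity g a c D η u1 u2) :=
  ((((hη.pow 2).const_mul g).add
    (((isSmooth_bottom hD).add hη).mul ((hu1.pow 2).add (hu2.pow 2)))).sub
    ((((isSmooth_bottom hD).pow 2).const_mul (c * g)).mul ((hη.pX.pow 2).add (hη.pY.pow 2)))).sub
    ((((isSmooth_bottom hD).pow 3).const_mul a).mul ((hu1.divU hu2).pow 2))

lemma isSmooth_energyFluxX (hD : ContDiff ℝ (⊤ : ℕ∞) fun p : ℝ × ℝ => D p.1 p.2)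
    (hη : IsSmooth η) (hu1 : IsSmooth u1) (hu2 : IsSmooth u2) :
    IsSmooth (energyFluxX g a b c D η u1 u2) :=
  ((((isSmooth_Qf hD hη hu1 hu2).mul (isSmooth_R1 hD hη hu1 hu2)).add
    ((((hu1.divU hu2).bottom_pow_mul hD 3).const_mul a).mul hu1.pT)).add
    ((hη.pT.const_mul (c * g)).mul (hη.pX.bottom_pow_mul hD 2))).sub
    ((hη.pT.const_mul b).mul (hu1.pT.bottom_pow_mul hD 2)) |>.const_mul 2

lemma isSmooth_energyFluxY (hD : ContDiff ℝ (⊤ : ℕ∞) fun p : ℝ × ℝ => D p.1 p.2)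
    (hη : IsSmooth η) (hu1 : IsSmooth u1) (hu2 : IsSmooth u2) :
    IsSmooth (energyFluxY g a b c D η u1 u2) :=
  ((((isSmooth_Qf hD hη hu1 hu2).mul (isSmooth_R2 hD hη hu1 hu2)).add
    ((((hu1.divU hu2).bottom_pow_mul hD 3).const_mul a).mul hu2.pT)).add
    ((hη.pT.const_mul (c * g)).mul (hη.pY.bottom_pow_mul hD 2))).sub
    ((hη.pT.const_mul b).mul (hu2.pT.bottom_pow_mul hD 2)) |>.const_mul 2

theorem energy_conservation_law (hD : ContDiff ℝ (⊤ : ℕ∞) fun p : ℝ × ℝ => D p.1 p.2)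
    (hη : IsSmooth η) (hu1 : IsSmooth u1) (hu2 : IsSmooth u2)
    (hmass : ∀ x y t : ℝ,
      pT η x y t + pX (R1 a b D η u1 u2) x y t + pY (R2 a b D η u1 u2) x y t = 0)
    (hmom1 : ∀ x y t : ℝ, pT u1 x y t + pX (Qf g b c D η u1 u2) x y t = 0)
    (hmom2 : ∀ x y t : ℝ, pT u2 x y t + pY (Qf g b c D η u1 u2) x y t = 0) (x y t : ℝ) :
    pT (energyDensity g a c D η u1 u2) x y t + pX (energyFluxX g a b c D η u1 u2) x y t
      + pY (energyFluxY g a b c D η u1 u2) x y t = 0 := by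
  have hQ := isSmooth_Qf (g := g) (b := b) (c := c) hD hη hu1 hu2
  have hR1 := isSmooth_R1 (a := a) (b := b) hD hη hu1 hu2
  have hR2 := isSmooth_R2 (a := a) (b := b) hD hη hu1 hu2
  have hw := hu1.divU hu2
  have hA := hw.bottom_pow_mul hD 3
  have het : pT (energyDensity g a c D η u1 u2) x y t = _ :=
    (((((hη.hasDerivAt_pT x y t).pow 2).const_mul g).add
      (((hη.hasDerivAt_pT x y t).const_add (D x y)).mul
        (((hu1.hasDerivAt_pT x y t).pow 2).add ((hu2.hasDerivAt_pT x y t).pow 2)))).sub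
      ((((hη.pX.hasDerivAt_pT x y t).pow 2).add ((hη.pY.hasDerivAt_pT x y t).pow 2)).const_mul
        (c * g * D x y ^ 2))).sub
      (((hw.hasDerivAt_pT x y t).pow 2).const_mul (a * D x y ^ 3)) |>.deriv
  have hFx : pX (energyFluxX g a b c D η u1 u2) x y t = _ :=
    (((((hQ.hasDerivAt_pX x y t).mul (hR1.hasDerivAt_pX x y t)).add
      (((hA.hasDerivAt_pX x y t).const_mul a).mul (hu1.pT.hasDerivAt_pX x y t))).add
      (((hη.pT.hasDerivAt_pX x y t).const_mul (c * g)).mul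
        ((hη.pX.bottom_pow_mul hD 2).hasDerivAt_pX x y t))).sub
      (((hη.pT.hasDerivAt_pX x y t).const_mul b).mul
        ((hu1.pT.bottom_pow_mul hD 2).hasDerivAt_pX x y t))).const_mul 2 |>.deriv
  have hGy : pY (energyFluxY g a b c D η u1 u2) x y t = _ :=
    (((((hQ.hasDerivAt_pY x y t).mul (hR2.hasDerivAt_pY x y t)).add
      (((hA.hasDerivAt_pY x y t).const_mul a).mul (hu2.pT.hasDerivAt_pY x y t))).add
      (((hη.pT.hasDerivAt_pY x y t).const_mul (c * g)).mul
        ((hη.pY.bottom_pow_mul hD 2).hasDerivAt_pY x y t))).sub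
      (((hη.pT.hasDerivAt_pY x y t).const_mul b).mul
        ((hu2.pT.bottom_pow_mul hD 2).hasDerivAt_pY x y t))).const_mul 2 |>.deriv
  have hwt : pT (divU u1 u2) x y t = pX (pT u1) x y t + pY (pT u2) x y t := by
    rw [← hu1.pT_pX_comm, ← hu2.pT_pY_comm]
    exact ((hu1.pX.hasDerivAt_pT x y t).add (hu2.pY.hasDerivAt_pT x y t)).deriv
  rw [het, hFx, hGy, hwt, hη.pT_pX_comm, hη.pT_pY_comm]
  linear_combination (norm := skip) 2 * R1 a b D η u1 u2 x y t * hmom1 x y t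
    + 2 * R2 a b D η u1 u2 x y t * hmom2 x y t + 2 * Qf g b c D η u1 u2 x y t * hmass x y t
  simp only [Qf, R1, R2, Pi.add_apply, Pi.pow_apply]
  ring

lemma vanishesOutside_energyDensity (hK : IsClosed K) (hη : VanishesOutside K η)
    (hu1 : VanishesOutside K u1) (hu2 : VanishesOutside K u2) :
    VanishesOutside K (energyDensity g a c D η u1 u2) := fun x y t hxy => by
  rw [energyDensity, hη x y t hxy, hu1 x y t hxy, hu2 x y t hxy, hη.pX hK x y t hxy,
    hη.pY hK x y t hxy, hu1.divU hK hu2 x y t hxy]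
  ring

lemma vanishesOutside_Qf (hK : IsClosed K) (hη : VanishesOutside K η)
    (hu1 : VanishesOutside K u1) (hu2 : VanishesOutside K u2) :
    VanishesOutside K (Qf g b c D η u1 u2) := fun x y t hxy => by
  rw [Qf, hη x y t hxy, hu1 x y t hxy, hu2 x y t hxy,
    ((hη.pX hK).mul_left _).pX hK x y t hxy, ((hη.pY hK).mul_left _).pY hK x y t hxy,
    (hu1.pT.mul_left _).pX hK x y t hxy, (hu2.pT.mul_left _).pY hK x y t hxy]
  ring

lemma vanishesOutside_energyFluxX (hK : IsClosed K) (hη : VanishesOutside K η)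
    (hu1 : VanishesOutside K u1) (hu2 : VanishesOutside K u2) :
    VanishesOutside K (energyFluxX g a b c D η u1 u2) := fun x y t hxy => by
  rw [energyFluxX, vanishesOutside_Qf hK hη hu1 hu2 x y t hxy, hu1.pT x y t hxy,
    hη.pT x y t hxy]
  ring

lemma vanishesOutside_energyFluxY (hK : IsClosed K) (hη : VanishesOutside K η)
    (hu1 : VanishesOutside K u1) (hu2 : VanishesOutside K u2) :
    VanishesOutside K (energyFluxY g a b c D η u1 u2) := fun x y t hxy => by
  rw [energyFluxY, vanishesOutside_Qf hK hη hu1 hu2 x y t hxy, hu2.pT x y t hxy,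
    hη.pT x y t hxy]
  ring

end Energy

end Boussinesq

open Boussinesq

/-- smooth, compactly supported solutions of the energy-conserving
abcd-Boussinesq system (with equal regularization parameters b = d) over a
smooth time-independent bottom D conserve the energy E(t) = E(0) for all t. -/
theorem abcd_energy_conservation
    (g a b c : ℝ) (D : ℝ → ℝ → ℝ) (η u1 u2 : ℝ → ℝ → ℝ → ℝ)
    (hD : ContDiff ℝ (⊤ : ℕ∞) fun p : ℝ × ℝ => D p.1 p.2)
    (hη : ContDiff ℝ (⊤ : ℕ∞) fun p : ℝ × ℝ × ℝ => η p.1 p.2.1 p.2.2)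
    (hu1 : ContDiff ℝ (⊤ : ℕ∞) fun p : ℝ × ℝ × ℝ => u1 p.1 p.2.1 p.2.2)
    (hu2 : ContDiff ℝ (⊤ : ℕ∞) fun p : ℝ × ℝ × ℝ => u2 p.1 p.2.1 p.2.2)
    (hmass : ∀ x y t : ℝ,
      pT η x y t + pX (R1 a b D η u1 u2) x y t + pY (R2 a b D η u1 u2) x y t = 0)
    (hmom1 : ∀ x y t : ℝ, pT u1 x y t + pX (Qf g b c D η u1 u2) x y t = 0)
    (hmom2 : ∀ x y t : ℝ, pT u2 x y t + pY (Qf g b c D η u1 u2) x y t = 0)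
    (K : Set (ℝ × ℝ)) (hK : IsCompact K)
    (hsupp : ∀ t x y : ℝ, (x, y) ∉ K →
      η x y t = 0 ∧ u1 x y t = 0 ∧ u2 x y t = 0) :
    ∀ t : ℝ, energy g a c D η u1 u2 t = energy g a c D η u1 u2 0 := by
  have vη : VanishesOutside K η := fun x y t h => (hsupp t x y h).1
  have vu1 : VanishesOutside K u1 := fun x y t h => (hsupp t x y h).2.1
  have vu2 : VanishesOutside K u2 := fun x y t h => (hsupp t x y h).2.2
  intro t
  exact congrArg (1 / 2 * ·) <| integral_eq_of_conservation_law hK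
    (isSmooth_energyDensity hD hη hu1 hu2) (isSmooth_energyFluxX hD hη hu1 hu2)
    (isSmooth_energyFluxY hD hη hu1 hu2) (vanishesOutside_energyDensity hK.isClosed vη vu1 vu2)
    (vanishesOutside_energyFluxX hK.isClosed vη vu1 vu2)
    (vanishesOutside_energyFluxY hK.isClosed vη vu1 vu2)
    (energy_conservation_law hD hη hu1 hu2 hmass hmom1 hmom2) t 0
end
end

section
/- Let g, a, b, c be real numbers and let D : ℝ² → ℝ be smooth and time-independent. Suppose η : ℝ² × ℝ → ℝ and u : ℝ² × ℝ → ℝ² are smooth and satisfy, at every point of ℝ² × ℝ, the system ∂_t η + ∇·R = 0 and ∂_t u + ∇Q = 0, where Q = gη + ½|u|² + c g ∇·(D² ∇η) − b ∇·(D² ∂_t u) and R = (D+η)u + a∇(D³ ∇·u) − b D² ∇(∂_t η). Define the energy density e = gη² + (D+η)|u|² − c g D² |∇η|² − a D³ (∇·u)² and the flux F = Q·R + c g (∂_t η) D² ∇η + a (D³ ∇·u) ∂_t u − b (∂_t η) D² ∂_t u. Then the pointwise local conservation law ∂_t(½ e) + ∇·F = 0 holds at every point of ℝ² × ℝ. 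-/
noncomputable section

/-- Energy density e = gη² + (D+η)|u|² − c g D²|∇η|² − a D³(∇·u)². -/
def eDen (g a c : ℝ) (D : ℝ → ℝ → ℝ) (η u1 u2 : ℝ → ℝ → ℝ → ℝ) : ℝ → ℝ → ℝ → ℝ :=
  fun x y t => g * (η x y t)^2
    + (D x y + η x y t) * ((u1 x y t)^2 + (u2 x y t)^2)
    - c * g * (D x y)^2 * ((pX η x y t)^2 + (pY η x y t)^2)
    - a * (D x y)^3 * (divU u1 u2 x y t)^2

/-- First component of the flux
F = Q R + c g (∂ₜη) D² ∇η + a (D³∇·u) ∂ₜu − b (∂ₜη) D² ∂ₜu. -/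
def F1 (g a b c : ℝ) (D : ℝ → ℝ → ℝ) (η u1 u2 : ℝ → ℝ → ℝ → ℝ) : ℝ → ℝ → ℝ → ℝ :=
  fun x y t => Qf g b c D η u1 u2 x y t * R1 a b D η u1 u2 x y t
    + c * g * pT η x y t * (D x y)^2 * pX η x y t
    + a * ((D x y)^3 * divU u1 u2 x y t) * pT u1 x y t
    - b * pT η x y t * (D x y)^2 * pT u1 x y t

/-- Second component of the flux
F = Q R + c g (∂ₜη) D² ∇η + a (D³∇·u) ∂ₜu − b (∂ₜη) D² ∂ₜu. -/
def F2 (g a b c : ℝ) (D : ℝ → ℝ → ℝ) (η u1 u2 : ℝ → ℝ → ℝ → ℝ) : ℝ → ℝ → ℝ → ℝ :=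
  fun x y t => Qf g b c D η u1 u2 x y t * R2 a b D η u1 u2 x y t
    + c * g * pT η x y t * (D x y)^2 * pY η x y t
    + a * ((D x y)^3 * divU u1 u2 x y t) * pT u2 x y t
    - b * pT η x y t * (D x y)^2 * pT u2 x y t

/-! For arbitrary smooth `η` and `u`, solutions or not, expanding everything with the product
rule and commuting `∂ₜ` with `∂ₓ` and `∂ᵧ` gives the identity
`∂ₜ(½e) + ∇·F = Q (∂ₜη + ∇·R) + R·(∂ₜu + ∇Q)`.
On solutions both brackets vanish. -/

open scoped ContDiff

theorem fderiv_fderiv_apply_comm {E F : Type*} [NormedAddCommGroup E] [NormedSpace ℝ E]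
    [NormedAddCommGroup F] [NormedSpace ℝ F] {f : E → F} {x : E} (hf : ContDiffAt ℝ 2 f x)
    (v w : E) :
    fderiv ℝ (fun y => fderiv ℝ f y v) x w = fderiv ℝ (fun y => fderiv ℝ f y w) x v := by
  have hf' : DifferentiableAt ℝ (fderiv ℝ f) x :=
    (hf.fderiv_right (m := 1) le_rfl).differentiableAt one_ne_zero
  rw [fderiv_clm_apply hf' (differentiableAt_const v),
    fderiv_clm_apply hf' (differentiableAt_const w)]
  simpa using (hf.isSymmSndFDerivAt (by simp)).eq w v

def uncurry3 (f : ℝ → ℝ → ℝ → ℝ) (p : ℝ × ℝ × ℝ) : ℝ := f p.1 p.2.1 p.2.2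

def Smooth3 (f : ℝ → ℝ → ℝ → ℝ) : Prop := ContDiff ℝ ∞ (uncurry3 f)

namespace Smooth3

variable {f h : ℝ → ℝ → ℝ → ℝ}

theorem hasDerivAt_comp (hf : Smooth3 f) {γ : ℝ → ℝ × ℝ × ℝ} {v : ℝ × ℝ × ℝ} {s : ℝ}
    (hγ : HasDerivAt γ v s) :
    HasDerivAt (fun s => uncurry3 f (γ s)) (fderiv ℝ (uncurry3 f) (γ s) v) s :=
  (hf.differentiable (by simp) (γ s)).hasFDerivAt.comp_hasDerivAt s hγ

theorem pX_eq_fderiv (hf : Smooth3 f) (x y t : ℝ) :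
    pX f x y t = fderiv ℝ (uncurry3 f) (x, y, t) (1, 0, 0) :=
  (hf.hasDerivAt_comp ((hasDerivAt_id x).prodMk (hasDerivAt_const x (y, t)))).deriv

theorem pY_eq_fderiv (hf : Smooth3 f) (x y t : ℝ) :
    pY f x y t = fderiv ℝ (uncurry3 f) (x, y, t) (0, 1, 0) :=
  (hf.hasDerivAt_comp ((hasDerivAt_const y x).prodMk
    ((hasDerivAt_id y).prodMk (hasDerivAt_const y t)))).deriv

theorem pT_eq_fderiv (hf : Smooth3 f) (x y t : ℝ) :
    pT f x y t = fderiv ℝ (uncurry3 f) (x, y, t) (0, 0, 1) :=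
  (hf.hasDerivAt_comp ((hasDerivAt_const t x).prodMk
    ((hasDerivAt_const t y).prodMk (hasDerivAt_id t)))).deriv

theorem hasDerivAt_pX (hf : Smooth3 f) (x y t : ℝ) :
    HasDerivAt (fun s => f s y t) (pX f x y t) x :=
  (hf.hasDerivAt_comp ((hasDerivAt_id x).prodMk (hasDerivAt_const x (y, t)))).differentiableAt
    |>.hasDerivAt

theorem hasDerivAt_pY (hf : Smooth3 f) (x y t : ℝ) :
    HasDerivAt (fun s => f x s t) (pY f x y t) y :=
  (hf.hasDerivAt_comp ((hasDerivAt_const y x).prodMk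
    ((hasDerivAt_id y).prodMk (hasDerivAt_const y t)))).differentiableAt.hasDerivAt

theorem hasDerivAt_pT (hf : Smooth3 f) (x y t : ℝ) :
    HasDerivAt (fun s => f x y s) (pT f x y t) t :=
  (hf.hasDerivAt_comp ((hasDerivAt_const t x).prodMk
    ((hasDerivAt_const t y).prodMk (hasDerivAt_id t)))).differentiableAt.hasDerivAt

theorem uncurry3_pX (hf : Smooth3 f) :
    uncurry3 (pX f) = fun p => fderiv ℝ (uncurry3 f) p (1, 0, 0) :=
  funext fun p => hf.pX_eq_fderiv p.1 p.2.1 p.2.2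

theorem uncurry3_pY (hf : Smooth3 f) :
    uncurry3 (pY f) = fun p => fderiv ℝ (uncurry3 f) p (0, 1, 0) :=
  funext fun p => hf.pY_eq_fderiv p.1 p.2.1 p.2.2

theorem uncurry3_pT (hf : Smooth3 f) :
    uncurry3 (pT f) = fun p => fderiv ℝ (uncurry3 f) p (0, 0, 1) :=
  funext fun p => hf.pT_eq_fderiv p.1 p.2.1 p.2.2

theorem contDiff_fderiv_apply (hf : Smooth3 f) (v : ℝ × ℝ × ℝ) :
    ContDiff ℝ ∞ fun p => fderiv ℝ (uncurry3 f) p v :=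
  (hf.fderiv_right (by simp)).clm_apply contDiff_const

protected theorem pX (hf : Smooth3 f) : Smooth3 (pX f) := by
  rw [Smooth3, hf.uncurry3_pX]; exact hf.contDiff_fderiv_apply _

protected theorem pY (hf : Smooth3 f) : Smooth3 (pY f) := by
  rw [Smooth3, hf.uncurry3_pY]; exact hf.contDiff_fderiv_apply _

protected theorem pT (hf : Smooth3 f) : Smooth3 (pT f) := by
  rw [Smooth3, hf.uncurry3_pT]; exact hf.contDiff_fderiv_apply _

theorem pT_pX (hf : Smooth3 f) (x y t : ℝ) : pT (pX f) x y t = pX (pT f) x y t := by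
  rw [hf.pX.pT_eq_fderiv, hf.pT.pX_eq_fderiv, hf.uncurry3_pX, hf.uncurry3_pT]
  exact fderiv_fderiv_apply_comm (hf.contDiffAt.of_le (WithTop.coe_le_coe.2 le_top)) _ _

theorem pT_pY (hf : Smooth3 f) (x y t : ℝ) : pT (pY f) x y t = pY (pT f) x y t := by
  rw [hf.pY.pT_eq_fderiv, hf.pT.pY_eq_fderiv, hf.uncurry3_pY, hf.uncurry3_pT]
  exact fderiv_fderiv_apply_comm (hf.contDiffAt.of_le (WithTop.coe_le_coe.2 le_top)) _ _

protected theorem add (hf : Smooth3 f) (hh : Smooth3 h) : Smooth3 fun x y t => f x y t + h x y t :=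
  ContDiff.add hf hh

protected theorem sub (hf : Smooth3 f) (hh : Smooth3 h) : Smooth3 fun x y t => f x y t - h x y t :=
  ContDiff.sub hf hh

protected theorem mul (hf : Smooth3 f) (hh : Smooth3 h) : Smooth3 fun x y t => f x y t * h x y t :=
  ContDiff.mul hf hh

protected theorem const_mul (k : ℝ) (hf : Smooth3 f) : Smooth3 fun x y t => k * f x y t :=
  contDiff_const.mul hf

protected theorem div_const (hf : Smooth3 f) (k : ℝ) : Smooth3 fun x y t => f x y t / k :=
  ContDiff.div_const hf k

protected theorem pow (hf : Smooth3 f) (n : ℕ) : Smooth3 fun x y t => f x y t ^ n :=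
  ContDiff.pow hf n

theorem pX_mul (hf : Smooth3 f) (hh : Smooth3 h) (x y t : ℝ) :
    pX (fun x y t => f x y t * h x y t) x y t = pX f x y t * h x y t + f x y t * pX h x y t :=
  ((hf.hasDerivAt_pX x y t).fun_mul (hh.hasDerivAt_pX x y t)).deriv

theorem pY_mul (hf : Smooth3 f) (hh : Smooth3 h) (x y t : ℝ) :
    pY (fun x y t => f x y t * h x y t) x y t = pY f x y t * h x y t + f x y t * pY h x y t :=
  ((hf.hasDerivAt_pY x y t).fun_mul (hh.hasDerivAt_pY x y t)).deriv

protected theorem divU (hf : Smooth3 f) (hh : Smooth3 h) : Smooth3 (divU f h) :=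
  hf.pX.add hh.pY

theorem pT_divU (hf : Smooth3 f) (hh : Smooth3 h) (x y t : ℝ) :
    pT (divU f h) x y t = divU (pT f) (pT h) x y t := by
  refine ((hf.pX.hasDerivAt_pT x y t).fun_add (hh.pY.hasDerivAt_pT x y t)).deriv.trans ?_
  rw [hf.pT_pX, hh.pT_pY]
  rfl

end Smooth3

theorem smooth3_of_contDiff_uncurry {D : ℝ → ℝ → ℝ}
    (hD : ContDiff ℝ ∞ (Function.uncurry D)) :
    Smooth3 fun x y _ => D x y :=
  hD.comp (contDiff_fst.prodMk (contDiff_fst.comp contDiff_snd))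

section EnergyFlux

variable {g a b c : ℝ} {D : ℝ → ℝ → ℝ} {η u1 u2 : ℝ → ℝ → ℝ → ℝ}

theorem smooth3_Qf (hD : ContDiff ℝ ∞ (Function.uncurry D)) (hη : Smooth3 η)
    (hu1 : Smooth3 u1) (hu2 : Smooth3 u2) : Smooth3 (Qf g b c D η u1 u2) := by
  have hD2 := (smooth3_of_contDiff_uncurry hD).pow 2
  exact (((hη.const_mul g).add (((hu1.pow 2).add (hu2.pow 2)).div_const 2)).add
      (((hD2.mul hη.pX).pX.add (hD2.mul hη.pY).pY).const_mul (c * g))).sub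
    (((hD2.mul hu1.pT).pX.add (hD2.mul hu2.pT).pY).const_mul b)

theorem smooth3_R1 (hD : ContDiff ℝ ∞ (Function.uncurry D)) (hη : Smooth3 η)
    (hu1 : Smooth3 u1) (hu2 : Smooth3 u2) : Smooth3 (R1 a b D η u1 u2) := by
  have hD' := smooth3_of_contDiff_uncurry hD
  exact (((hD'.add hη).mul hu1).add (((hD'.pow 3).mul (hu1.divU hu2)).pX.const_mul a)).sub
    (((hD'.pow 2).const_mul b).mul hη.pT.pX)

theorem smooth3_R2 (hD : ContDiff ℝ ∞ (Function.uncurry D)) (hη : Smooth3 η)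
    (hu1 : Smooth3 u1) (hu2 : Smooth3 u2) : Smooth3 (R2 a b D η u1 u2) := by
  have hD' := smooth3_of_contDiff_uncurry hD
  exact (((hD'.add hη).mul hu2).add (((hD'.pow 3).mul (hu1.divU hu2)).pY.const_mul a)).sub
    (((hD'.pow 2).const_mul b).mul hη.pT.pY)

theorem Qf_eq (hD : ContDiff ℝ ∞ (Function.uncurry D)) (hη : Smooth3 η)
    (hu1 : Smooth3 u1) (hu2 : Smooth3 u2) (x y t : ℝ) :
    Qf g b c D η u1 u2 x y t = g * η x y t + (u1 x y t ^ 2 + u2 x y t ^ 2) / 2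
      + c * g * (pX (fun x y _ => D x y ^ 2) x y t * pX η x y t + D x y ^ 2 * pX (pX η) x y t
        + pY (fun x y _ => D x y ^ 2) x y t * pY η x y t + D x y ^ 2 * pY (pY η) x y t)
      - b * (pX (fun x y _ => D x y ^ 2) x y t * pT u1 x y t + D x y ^ 2 * pX (pT u1) x y t
        + pY (fun x y _ => D x y ^ 2) x y t * pT u2 x y t + D x y ^ 2 * pY (pT u2) x y t) := by
  have hD2 := (smooth3_of_contDiff_uncurry hD).pow 2
  simp only [Qf]
  rw [hD2.pX_mul hη.pX, hD2.pY_mul hη.pY, hD2.pX_mul hu1.pT, hD2.pY_mul hu2.pT]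
  ring

theorem pT_half_eDen (hη : Smooth3 η) (hu1 : Smooth3 u1) (hu2 : Smooth3 u2) (x y t : ℝ) :
    pT (fun x y t => (1/2) * eDen g a c D η u1 u2 x y t) x y t
      = g * η x y t * pT η x y t + pT η x y t * (u1 x y t ^ 2 + u2 x y t ^ 2) / 2
        + (D x y + η x y t) * (u1 x y t * pT u1 x y t + u2 x y t * pT u2 x y t)
        - c * g * D x y ^ 2 * (pX η x y t * pX (pT η) x y t + pY η x y t * pY (pT η) x y t)
        - a * D x y ^ 3 * divU u1 u2 x y t * divU (pT u1) (pT u2) x y t := by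
  have hηt := hη.hasDerivAt_pT x y t
  have hu1t := hu1.hasDerivAt_pT x y t
  have hu2t := hu2.hasDerivAt_pT x y t
  have hgrad :=
    ((hη.pX.hasDerivAt_pT x y t).fun_pow 2).fun_add ((hη.pY.hasDerivAt_pT x y t).fun_pow 2)
  have hdiv := (hu1.divU hu2).hasDerivAt_pT x y t
  refine ((((hηt.fun_pow 2).const_mul g).fun_add
      (((hasDerivAt_const t (D x y)).fun_add hηt).fun_mul
        ((hu1t.fun_pow 2).fun_add (hu2t.fun_pow 2)))).fun_sub
      (hgrad.const_mul (c * g * D x y ^ 2)) |>.fun_sub ((hdiv.fun_pow 2).const_mul (a * D x y ^ 3))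
      |>.const_mul (1/2)).deriv.trans ?_
  rw [hη.pT_pX, hη.pT_pY, hu1.pT_divU hu2]
  ring

theorem pX_F1 (hD : ContDiff ℝ ∞ (Function.uncurry D)) (hη : Smooth3 η)
    (hu1 : Smooth3 u1) (hu2 : Smooth3 u2) (x y t : ℝ) :
    pX (F1 g a b c D η u1 u2) x y t
      = pX (Qf g b c D η u1 u2) x y t * R1 a b D η u1 u2 x y t
        + Qf g b c D η u1 u2 x y t * pX (R1 a b D η u1 u2) x y t
        + c * g * (pX (pT η) x y t * D x y ^ 2 * pX η x y t
          + pT η x y t * pX (fun x y _ => D x y ^ 2) x y t * pX η x y t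
          + pT η x y t * D x y ^ 2 * pX (pX η) x y t)
        + a * (pX (fun x y t => D x y ^ 3 * divU u1 u2 x y t) x y t * pT u1 x y t
          + D x y ^ 3 * divU u1 u2 x y t * pX (pT u1) x y t)
        - b * (pX (pT η) x y t * D x y ^ 2 * pT u1 x y t
          + pT η x y t * pX (fun x y _ => D x y ^ 2) x y t * pT u1 x y t
          + pT η x y t * D x y ^ 2 * pX (pT u1) x y t) := by
  have hD' := smooth3_of_contDiff_uncurry hD
  have hQ := (smooth3_Qf (g := g) (b := b) (c := c) hD hη hu1 hu2).hasDerivAt_pX x y t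
  have hR := (smooth3_R1 (a := a) (b := b) hD hη hu1 hu2).hasDerivAt_pX x y t
  have hA := ((hD'.pow 3).mul (hu1.divU hu2)).hasDerivAt_pX x y t
  have hD2 := (hD'.pow 2).hasDerivAt_pX x y t
  have hηt := hη.pT.hasDerivAt_pX x y t
  have hu1t := hu1.pT.hasDerivAt_pX x y t
  refine ((hQ.fun_mul hR).fun_add
      (((hηt.const_mul (c * g)).fun_mul hD2).fun_mul (hη.pX.hasDerivAt_pX x y t))
    |>.fun_add ((hA.const_mul a).fun_mul hu1t)
    |>.fun_sub (((hηt.const_mul b).fun_mul hD2).fun_mul hu1t)).deriv.trans ?_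
  ring

theorem pY_F2 (hD : ContDiff ℝ ∞ (Function.uncurry D)) (hη : Smooth3 η)
    (hu1 : Smooth3 u1) (hu2 : Smooth3 u2) (x y t : ℝ) :
    pY (F2 g a b c D η u1 u2) x y t
      = pY (Qf g b c D η u1 u2) x y t * R2 a b D η u1 u2 x y t
        + Qf g b c D η u1 u2 x y t * pY (R2 a b D η u1 u2) x y t
        + c * g * (pY (pT η) x y t * D x y ^ 2 * pY η x y t
          + pT η x y t * pY (fun x y _ => D x y ^ 2) x y t * pY η x y t
          + pT η x y t * D x y ^ 2 * pY (pY η) x y t)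
        + a * (pY (fun x y t => D x y ^ 3 * divU u1 u2 x y t) x y t * pT u2 x y t
          + D x y ^ 3 * divU u1 u2 x y t * pY (pT u2) x y t)
        - b * (pY (pT η) x y t * D x y ^ 2 * pT u2 x y t
          + pT η x y t * pY (fun x y _ => D x y ^ 2) x y t * pT u2 x y t
          + pT η x y t * D x y ^ 2 * pY (pT u2) x y t) := by
  have hD' := smooth3_of_contDiff_uncurry hD
  have hQ := (smooth3_Qf (g := g) (b := b) (c := c) hD hη hu1 hu2).hasDerivAt_pY x y t
  have hR := (smooth3_R2 (a := a) (b := b) hD hη hu1 hu2).hasDerivAt_pY x y t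
  have hA := ((hD'.pow 3).mul (hu1.divU hu2)).hasDerivAt_pY x y t
  have hD2 := (hD'.pow 2).hasDerivAt_pY x y t
  have hηt := hη.pT.hasDerivAt_pY x y t
  have hu2t := hu2.pT.hasDerivAt_pY x y t
  refine ((hQ.fun_mul hR).fun_add
      (((hηt.const_mul (c * g)).fun_mul hD2).fun_mul (hη.pY.hasDerivAt_pY x y t))
    |>.fun_add ((hA.const_mul a).fun_mul hu2t)
    |>.fun_sub (((hηt.const_mul b).fun_mul hD2).fun_mul hu2t)).deriv.trans ?_
  ring

theorem energy_flux_identity (hD : ContDiff ℝ ∞ (Function.uncurry D)) (hη : Smooth3 η)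
    (hu1 : Smooth3 u1) (hu2 : Smooth3 u2) (x y t : ℝ) :
    pT (fun x y t => (1/2) * eDen g a c D η u1 u2 x y t) x y t
        + pX (F1 g a b c D η u1 u2) x y t + pY (F2 g a b c D η u1 u2) x y t
      = Qf g b c D η u1 u2 x y t
          * (pT η x y t + pX (R1 a b D η u1 u2) x y t + pY (R2 a b D η u1 u2) x y t)
        + R1 a b D η u1 u2 x y t * (pT u1 x y t + pX (Qf g b c D η u1 u2) x y t)
        + R2 a b D η u1 u2 x y t * (pT u2 x y t + pY (Qf g b c D η u1 u2) x y t) := by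
  rw [pT_half_eDen hη hu1 hu2, pX_F1 hD hη hu1 hu2, pY_F2 hD hη hu1 hu2, Qf_eq hD hη hu1 hu2]
  simp only [R1, R2, divU]
  ring

end EnergyFlux

/-- smooth solutions of ∂ₜη + ∇·R = 0, ∂ₜu + ∇Q = 0 satisfy the
pointwise local conservation law ∂ₜ(½e) + ∇·F = 0 at every point of ℝ²×ℝ. -/
theorem abcd_local_conservation_law
    (g a b c : ℝ) (D : ℝ → ℝ → ℝ) (η u1 u2 : ℝ → ℝ → ℝ → ℝ)
    (hD : ContDiff ℝ (⊤ : ℕ∞) fun p : ℝ × ℝ => D p.1 p.2)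
    (hη : ContDiff ℝ (⊤ : ℕ∞) fun p : ℝ × ℝ × ℝ => η p.1 p.2.1 p.2.2)
    (hu1 : ContDiff ℝ (⊤ : ℕ∞) fun p : ℝ × ℝ × ℝ => u1 p.1 p.2.1 p.2.2)
    (hu2 : ContDiff ℝ (⊤ : ℕ∞) fun p : ℝ × ℝ × ℝ => u2 p.1 p.2.1 p.2.2)
    (hmass : ∀ x y t : ℝ,
      pT η x y t + pX (R1 a b D η u1 u2) x y t + pY (R2 a b D η u1 u2) x y t = 0)
    (hmom1 : ∀ x y t : ℝ, pT u1 x y t + pX (Qf g b c D η u1 u2) x y t = 0)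
    (hmom2 : ∀ x y t : ℝ, pT u2 x y t + pY (Qf g b c D η u1 u2) x y t = 0) :
    ∀ x y t : ℝ,
      pT (fun x y t => (1/2) * eDen g a c D η u1 u2 x y t) x y t
        + pX (F1 g a b c D η u1 u2) x y t
        + pY (F2 g a b c D η u1 u2) x y t = 0 := by
  intro x y t
  rw [energy_flux_identity hD hη hu1 hu2, hmass, hmom1, hmom2]
  ring
end
end

section
/- Let η, D : ℝ × ℝ → ℝ be smooth (arguments (x,t)) and let u, w : ℝ × ℝ × ℝ → ℝ be smooth (arguments (x,z,t)). Assume: (i) the incompressibility relation ∂_x u + ∂_z w = 0 holds at every (x,z,t); (ii) the kinematic free-surface condition ∂_t η(x,t) + u(x, η(x,t), t) ∂_x η(x,t) − w(x, η(x,t), t) = 0 holds for all (x,t); (iii) the kinematic bottom condition ∂_t D(x,t) + u(x, −D(x,t), t) ∂_x D(x,t) + w(x, −D(x,t), t) = 0 holds for all (x,t). Then for all (x,t) the exact depth-integrated mass conservation equation holds: ∂_t η(x,t) + ∂_t D(x,t) + ∂_x ( ∫_{−D(x,t)}^{η(x,t)} u(x,z,t) dz ) = 0. -/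
/-!
Differentiating the flux `∫_{-D}^{η} u dz` in `x` by the Leibniz rule gives the boundary terms
`u(η) ∂ₓη + u(-D) ∂ₓD` plus `∫_{-D}^{η} ∂ₓu dz`. By incompressibility and the fundamental theorem
of calculus the integral is `w(-D) - w(η)`, and the two kinematic conditions turn the sum into
`-∂ₜη - ∂ₜD`.

The Leibniz rule with moving bounds is the chain rule applied to the parametric primitive
`(s, y) ↦ ∫_a^y f(s, z) dz`, which is strictly differentiable because both of its partial
derivatives are continuous.
-/

open intervalIntegral MeasureTheory Filter Function

variable {E : Type*} [NormedAddCommGroup E] [NormedSpace ℝ E]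
  {f f' : ℝ → ℝ → E}

theorem hasDerivAt_integral_of_continuous_partial_deriv (hf : Continuous ↿f)
    (hf' : Continuous ↿f') (hderiv : ∀ s z, HasDerivAt (f · z) (f' s z) s) (a b x : ℝ) :
    HasDerivAt (fun s => ∫ z in a..b, f s z) (∫ z in a..b, f' x z) x := by
  obtain ⟨M, hM⟩ := ((isCompact_closedBall x 1).prod isCompact_uIcc).exists_bound_of_continuousOn
    hf'.continuousOn
  refine (intervalIntegral.hasDerivAt_integral_of_dominated_loc_of_deriv_le (bound := fun _ => M)
    (Metric.closedBall_mem_nhds x one_pos)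
    (Eventually.of_forall fun s => (hf.uncurry_left s).aestronglyMeasurable)
    ((hf.uncurry_left x).intervalIntegrable a b) (hf'.uncurry_left x).aestronglyMeasurable
    (ae_of_all _ fun z hz s hs => hM (s, z) ⟨hs, Set.uIoc_subset_uIcc hz⟩) intervalIntegrable_const
    (ae_of_all _ fun z _ s _ => hderiv s z)).2

variable [CompleteSpace E]

theorem hasStrictFDerivAt_parametric_primitive (hf : Continuous ↿f)
    (hf' : Continuous ↿f') (hderiv : ∀ s z, HasDerivAt (f · z) (f' s z) s) (a : ℝ)
    (p : ℝ × ℝ) :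
    HasStrictFDerivAt (fun q : ℝ × ℝ => ∫ z in a..q.2, f q.1 z)
      ((ContinuousLinearMap.smulRight (1 : ℝ →L[ℝ] ℝ) (∫ z in a..p.2, f' p.1 z)).coprod
        (ContinuousLinearMap.smulRight (1 : ℝ →L[ℝ] ℝ) (f p.1 p.2))) p :=
  hasStrictFDerivAt_uncurry_coprod (f := fun s y => ∫ z in a..y, f s z)
    (f₁ := fun s y => ContinuousLinearMap.smulRight (1 : ℝ →L[ℝ] ℝ) (∫ z in a..y, f' s z))
    (f₂ := fun s y => ContinuousLinearMap.smulRight (1 : ℝ →L[ℝ] ℝ) (f s y))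
    (Eventually.of_forall fun q =>
      (hasDerivAt_integral_of_continuous_partial_deriv hf hf' hderiv a q.2 q.1).hasFDerivAt)
    (Eventually.of_forall fun q =>
      (integral_hasDerivAt_right ((hf.uncurry_left q.1).intervalIntegrable a q.2)
        ((hf.uncurry_left q.1).stronglyMeasurableAtFilter _ _)
        (hf.uncurry_left q.1).continuousAt).hasFDerivAt)
    (by
      have := continuous_parametric_intervalIntegral_of_continuous (μ := volume) (a₀ := a)
        (f := fun q : ℝ × ℝ => f' q.1) (hf'.comp (continuous_fst.prodMap continuous_id))
        continuous_snd
      exact ((ContinuousLinearMap.smulRightL ℝ ℝ E 1).continuous.comp this).continuousAt)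
    ((ContinuousLinearMap.smulRightL ℝ ℝ E 1).continuous.comp hf).continuousAt

theorem hasDerivAt_parametric_intervalIntegral (hf : Continuous ↿f)
    (hf' : Continuous ↿f') (hderiv : ∀ s z, HasDerivAt (f · z) (f' s z) s) {a b : ℝ → ℝ}
    {a' b' x : ℝ} (ha : HasDerivAt a a' x) (hb : HasDerivAt b b' x) :
    HasDerivAt (fun s => ∫ z in a s..b s, f s z)
      (b' • f x (b x) - a' • f x (a x) + ∫ z in a x..b x, f' x z) x := by
  have hprimitive : ∀ {c : ℝ → ℝ} {c' : ℝ}, HasDerivAt c c' x →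
      HasDerivAt (fun s => ∫ z in 0..c s, f s z) ((∫ z in 0..c x, f' x z) + c' • f x (c x)) x :=
    fun {c c'} hc => by
      simpa [comp_def] using (hasStrictFDerivAt_parametric_primitive hf hf' hderiv 0
        (x, c x)).hasFDerivAt.comp_hasDerivAt x ((hasDerivAt_id x).prodMk hc)
  have hint : ∀ s c d, IntervalIntegrable (f s) volume c d :=
    fun s _ _ => (hf.uncurry_left s).intervalIntegrable _ _
  have hint' : ∀ c d, IntervalIntegrable (f' x) volume c d :=
    fun _ _ => (hf'.uncurry_left x).intervalIntegrable _ _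
  convert (hprimitive hb).sub (hprimitive ha) using 1
  · exact funext fun s => (integral_interval_sub_left (hint s _ _) (hint s _ _)).symm
  · rw [← integral_interval_sub_left (hint' 0 (b x)) (hint' 0 (a x))]
    abel

theorem ContDiff.hasDerivAt_parametric_intervalIntegral (hf : ContDiff ℝ 1 ↿f) {a b : ℝ → ℝ}
    {a' b' x : ℝ} (ha : HasDerivAt a a' x) (hb : HasDerivAt b b' x) :
    HasDerivAt (fun s => ∫ z in a s..b s, f s z)
      (b' • f x (b x) - a' • f x (a x) + ∫ z in a x..b x, deriv (f · z) x) x := by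
  have hpartial : ∀ s z, HasDerivAt (f · z) (fderiv ℝ ↿f (s, z) (1, 0)) s := fun s z =>
    (hf.differentiable one_ne_zero (s, z)).hasFDerivAt.comp_hasDerivAt_of_eq s
      ((hasDerivAt_id s).prodMk (hasDerivAt_const s z)) rfl
  convert _root_.hasDerivAt_parametric_intervalIntegral hf.continuous
    ((hf.continuous_fderiv one_ne_zero).clm_apply continuous_const) hpartial ha hb using 2
  exact integral_congr fun z _ => (hpartial x z).deriv

/-- exact depth-integrated mass conservation in one horizontal
dimension. If ∂ₓu + ∂_z w = 0, together with the kinematic free-surface and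
bottom conditions, then ∂_t η + ∂_t D + ∂ₓ ∫_{−D}^{η} u dz = 0. -/
theorem depth_integrated_mass_conservation
    (η D : ℝ → ℝ → ℝ) (u w : ℝ → ℝ → ℝ → ℝ)
    (hη : ContDiff ℝ (⊤ : ℕ∞) fun p : ℝ × ℝ => η p.1 p.2)
    (hD : ContDiff ℝ (⊤ : ℕ∞) fun p : ℝ × ℝ => D p.1 p.2)
    (hu : ContDiff ℝ (⊤ : ℕ∞) fun p : ℝ × ℝ × ℝ => u p.1 p.2.1 p.2.2)
    (hw : ContDiff ℝ (⊤ : ℕ∞) fun p : ℝ × ℝ × ℝ => w p.1 p.2.1 p.2.2)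
    (hincomp : ∀ x z t : ℝ,
      deriv (fun s => u s z t) x + deriv (fun s => w x s t) z = 0)
    (hsurf : ∀ x t : ℝ,
      deriv (fun s => η x s) t
        + u x (η x t) t * deriv (fun s => η s t) x - w x (η x t) t = 0)
    (hbot : ∀ x t : ℝ,
      deriv (fun s => D x s) t
        + u x (-(D x t)) t * deriv (fun s => D s t) x + w x (-(D x t)) t = 0) :
    ∀ x t : ℝ,
      deriv (fun s => η x s) t + deriv (fun s => D x s) t
        + deriv (fun s => ∫ z in (-(D s t))..(η s t), u s z t) x = 0 := by
  intro x t
  have hsurface : HasDerivAt (η · t) (deriv (η · t) x) x :=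
    ((hη.comp (contDiff_id.prodMk contDiff_const)).differentiable (by simp) x).hasDerivAt
  have hbottom : HasDerivAt (fun s => -D s t) (-deriv (D · t) x) x :=
    ((hD.comp (contDiff_id.prodMk contDiff_const)).differentiable (by simp) x).hasDerivAt.neg
  have hvelocity : ContDiff ℝ 1 ↿(fun s z => u s z t) :=
    (hu.comp (contDiff_fst.prodMk (contDiff_snd.prodMk contDiff_const))).of_le
      (by exact_mod_cast le_top)
  have hvertical : ContDiff ℝ 1 (w x · t) :=
    (hw.comp (contDiff_const.prodMk (contDiff_id.prodMk contDiff_const))).of_le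
      (by exact_mod_cast le_top)
  have hflux : ∫ z in -D x t..η x t, deriv (fun s => u s z t) x
      = w x (-D x t) t - w x (η x t) t := by
    rw [integral_congr fun z _ => eq_neg_of_add_eq_zero_left (hincomp x z t),
      intervalIntegral.integral_neg,
      integral_deriv_eq_sub (fun z _ => hvertical.differentiable one_ne_zero z)
        ((hvertical.continuous_deriv le_rfl).intervalIntegrable _ _), neg_sub]
  rw [(hvelocity.hasDerivAt_parametric_intervalIntegral hbottom hsurface).deriv, hflux]
  simp only [smul_eq_mul]
  linarith [hsurf x t, hbot x t]
end

section
/- Let a, b, c, d ∈ ℝ satisfy a + b + c + d = 1/3 and (a + b)(b + c) + (a + b + c) d + d² = 2/15. Then the abcd dispersion ratio matches the Euler dispersion ratio to fourth order: the function x ↦ ((1 − a x²)(1 − c x²))/((1 + b x²)(1 + d x²)) − tanh(x)/x is O(x⁶) as x → 0 within ℝ \ {0}. -/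
/-!
Dividing the Taylor expansions of `sinh` and `cosh` (both read off that of `exp`) gives
`tanh x / x = P x + O(x ^ 6)` with `P x = 1 - x ^ 2 / 3 + 2 * x ^ 4 / 15`. Writing the abcd ratio as
`N / Q`, the two constraints on `a, b, c, d` say exactly that the `x ^ 2` and `x ^ 4` coefficients
of the polynomial `N - Q P` vanish, so `N / Q = P + O(x ^ 6)` as well.
-/

open Filter Topology Asymptotics

theorem isBigO_mul_of_tendsto {α 𝕜 : Type*} [NormedField 𝕜] {l : Filter α} {f g : α → 𝕜}
    {c : 𝕜} (hf : Tendsto f l (𝓝 c)) : (fun x => g x * f x) =O[l] g := by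
  simpa using (isBigO_refl g l).mul (hf.isBigO_one 𝕜)

theorem Asymptotics.IsBigO.div_id_nhdsNE {𝕜 : Type*} [NormedField 𝕜] {f : 𝕜 → 𝕜} {n : ℕ}
    (hf : f =O[𝓝 0] (· ^ (n + 1))) : (fun x => f x / x) =O[𝓝[≠] 0] (· ^ n) := by
  refine ((hf.mono nhdsWithin_le_nhds).mul (isBigO_refl (·⁻¹) _)).congr' ?_ ?_
  · exact .of_forall fun x => (div_eq_mul_inv _ _).symm
  · filter_upwards [self_mem_nhdsWithin] with x (hx : x ≠ 0)
    rw [pow_succ, mul_inv_cancel_right₀ hx]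

namespace Real

theorem exp_neg_sub_sum_range_isBigO_pow (n : ℕ) :
    (fun x => exp (-x) - ∑ i ∈ Finset.range n, (-x) ^ i / i.factorial) =O[𝓝 0] (· ^ n) := by
  have hneg : Tendsto (fun x : ℝ => -x) (𝓝 0) (𝓝 0) := by
    simpa using (continuous_neg.tendsto (0 : ℝ))
  refine ((exp_sub_sum_range_isBigO_pow n).comp_tendsto hneg).trans
    (isBigO_of_le _ fun x => ?_)
  simp [norm_pow]

theorem sinh_sub_taylor_isBigO :
    (fun x => sinh x - (x + x ^ 3 / 6 + x ^ 5 / 120)) =O[𝓝 0] (· ^ 7) := by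
  refine (((exp_sub_sum_range_isBigO_pow 7).sub
    (exp_neg_sub_sum_range_isBigO_pow 7)).const_mul_left (1 / 2)).congr_left fun x => ?_
  simp only [Finset.sum_range_succ, Finset.sum_range_zero, sinh_eq]
  norm_num [Nat.factorial]
  ring

theorem cosh_sub_taylor_isBigO :
    (fun x => cosh x - (1 + x ^ 2 / 2 + x ^ 4 / 24)) =O[𝓝 0] (· ^ 6) := by
  refine (((exp_sub_sum_range_isBigO_pow 6).add
    (exp_neg_sub_sum_range_isBigO_pow 6)).const_mul_left (1 / 2)).congr_left fun x => ?_
  simp only [Finset.sum_range_succ, Finset.sum_range_zero, cosh_eq]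
  norm_num [Nat.factorial]
  ring

theorem sinh_sub_mul_cosh_isBigO :
    (fun x => sinh x - x * (1 - x ^ 2 / 3 + 2 * x ^ 4 / 15) * cosh x) =O[𝓝 0] (· ^ 7) := by
  have hP : (fun x : ℝ => x * (1 - x ^ 2 / 3 + 2 * x ^ 4 / 15)) =O[𝓝 0] id :=
    isBigO_mul_of_tendsto (Continuous.tendsto (by fun_prop) 0)
  have hcosh : (fun x => x * (1 - x ^ 2 / 3 + 2 * x ^ 4 / 15) *
      (cosh x - (1 + x ^ 2 / 2 + x ^ 4 / 24))) =O[𝓝 0] (· ^ 7) :=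
    (hP.mul cosh_sub_taylor_isBigO).congr_right fun x => by rw [id, ← pow_succ']
  -- `x + x³/6 + x⁵/120 - x P(x) (1 + x²/2 + x⁴/24) = -x⁷ (19/360 + x²/180)`
  have hpoly : (fun x : ℝ => x ^ 7 * (19 / 360 + x ^ 2 / 180)) =O[𝓝 0] (· ^ 7) :=
    isBigO_mul_of_tendsto (Continuous.tendsto (by fun_prop) 0)
  refine ((sinh_sub_taylor_isBigO.sub hcosh).sub hpoly).congr_left fun x => ?_
  ring

theorem tanh_div_self_sub_taylor_isBigO :
    (fun x => tanh x / x - (1 - x ^ 2 / 3 + 2 * x ^ 4 / 15)) =O[𝓝[≠] 0] (· ^ 6) := by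
  have hcosh : Tendsto (fun x => (cosh x)⁻¹) (𝓝[≠] 0) (𝓝 (cosh 0)⁻¹) :=
    ((continuous_cosh.tendsto 0).inv₀ (cosh_pos 0).ne').mono_left nhdsWithin_le_nhds
  refine (isBigO_mul_of_tendsto hcosh).trans sinh_sub_mul_cosh_isBigO.div_id_nhdsNE
    |>.congr' ?_ .rfl
  filter_upwards [self_mem_nhdsWithin] with x (hx : x ≠ 0)
  rw [tanh_eq_sinh_div_cosh]
  field_simp [(cosh_pos x).ne']

end Real

theorem abcd_ratio_sub_taylor_isBigO {a b c d : ℝ} (h1 : a + b + c + d = 1 / 3)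
    (h2 : (a + b) * (b + c) + (a + b + c) * d + d ^ 2 = 2 / 15) :
    (fun x : ℝ => (1 - a * x ^ 2) * (1 - c * x ^ 2) / ((1 + b * x ^ 2) * (1 + d * x ^ 2))
      - (1 - x ^ 2 / 3 + 2 * x ^ 4 / 15)) =O[𝓝 0] (· ^ 6) := by
  have hQ : Continuous fun x : ℝ => (1 + b * x ^ 2) * (1 + d * x ^ 2) := by fun_prop
  have hQ0 : (1 + b * 0 ^ 2) * (1 + d * 0 ^ 2) ≠ (0 : ℝ) := by simp
  -- `(N - Q P) / x ^ 6`, once `h1` and `h2` have killed the `x ^ 2` and `x ^ 4` coefficients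
  have hR := (Continuous.tendsto (f := fun x : ℝ => b * d / 3 - 2 * (b + d) / 15
    - 2 * b * d / 15 * x ^ 2) (by fun_prop) 0).div (hQ.tendsto 0) hQ0
  refine (isBigO_mul_of_tendsto hR).congr' ?_ .rfl
  filter_upwards [hQ.continuousAt.eventually_ne hQ0] with x hx
  rw [Pi.div_apply, eq_sub_iff_add_eq, ← mul_div_assoc, div_add' _ _ _ hx, div_left_inj' hx]
  linear_combination (x ^ 2 + (b + d) * x ^ 4) * h1 - x ^ 4 * h2

/-- If a + b + c + d = 1/3 and
(a+b)(b+c) + (a+b+c)d + d² = 2/15, then the abcd dispersion ratio matches the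
Euler dispersion ratio to fourth order:
((1 − a x²)(1 − c x²))/((1 + b x²)(1 + d x²)) − tanh(x)/x = O(x⁶)
as x → 0 within ℝ \ {0}. -/
theorem abcd_matches_euler_fourth_order (a b c d : ℝ)
    (h1 : a + b + c + d = 1/3)
    (h2 : (a + b) * (b + c) + (a + b + c) * d + d^2 = 2/15) :
    (fun x : ℝ =>
        ((1 - a * x^2) * (1 - c * x^2)) / ((1 + b * x^2) * (1 + d * x^2))
          - Real.tanh x / x)
      =O[𝓝[≠] (0:ℝ)] fun x : ℝ => x^6 :=
  (((abcd_ratio_sub_taylor_isBigO h1 h2).mono nhdsWithin_le_nhds).sub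
    Real.tanh_div_self_sub_taylor_isBigO).congr_left fun x => by ring
end
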